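/- arXiv:2203.08205 — 2 statements merged into one kernel-verified Lean document; each statement's English description precedes it below -/
import Mathlib

section
/- Universal approximation of IFNOs (the paper's main Theorem, made precise on compact input sets): Let M ≥ 1, let K ⊆ ℝ^M be a nonempty compact set of input (loading) vectors, let U* : K → ℝ^M be a solution map, let U⁰ ∈ ℝ^M be a fixed initial guess, and let R : ℝ^M × ℝ^M → ℝ^M be continuous and satisfy (i) R(U*(F), F) = 0 for all F ∈ K, (ii) there exists m > 0 with ‖R(U, F) − R(V, F)‖ ≤ m‖U − V‖ for all U, V ∈ ℝ^M and all F ∈ K, and (iii) the fixed-point iteration U^{l+1}(F) = U^l(F) + R(U^l(F), F) with U^0(F) = U⁰ converges uniformly on K: for every ε > 0 there is an integer L₀ such that ‖U^l(F) − U*(F)‖ ≤ ε for all l ≥ L₀ and all F ∈ K. Then for every ε > 0 there exist a depth L ∈ ℕ, a feature dimension d ∈ ℕ, and IFNO parameters P ∈ ℝ^{dM×2M}, p ∈ ℝ^{dM}, V ∈ ℝ^{d×d}, C ∈ ℝ^{dM}, Q₁ ∈ ℝ^{dM×dM}, Q₂ ∈ ℝ^{M×dM}, q₁ ∈ ℝ^{dM},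 q₂ ∈ ℝ^M such that ‖𝒬(ℒ^L(𝒫([U⁰; F]))) − U*(F)‖ ≤ ε for every F ∈ K, where [U⁰; F] ∈ ℝ^{2M} denotes the concatenation of U⁰ and F. -/
open Matrix

/-- Entrywise ReLU applied to a vector. -/
noncomputable def vecReLU {ι : Type*} (z : ι → ℝ) : ι → ℝ := fun i => max (z i) 0

/-- The IFNO iterative layer `ℒ(H) = H + σ(Ṽ H + C)` with `Ṽ = 𝟙_{M×M} ⊗ V`
the Kronecker product of the `M×M` all-ones matrix with `V`.  Feature vectors in
`ℝ^{dM}` are indexed by `Fin M × Fin d`. -/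
noncomputable def ifnoLayer (M d : ℕ) (V : Matrix (Fin d) (Fin d) ℝ)
    (C : Fin M × Fin d → ℝ) (H : Fin M × Fin d → ℝ) : Fin M × Fin d → ℝ :=
  H + vecReLU
    ((Matrix.kroneckerMap (· * ·) (Matrix.of fun _ _ : Fin M => (1 : ℝ)) V).mulVec H + C)

/-- The IFNO of depth `L`: lifting layer `𝒫(z) = P z + p`, followed by `L` iterative
layers, followed by the projection layer `𝒬(H) = Q₂(Q₁ H + q₁) + q₂` with identity
activation.  Inputs in `ℝ^{2M}` are indexed by `Fin M ⊕ Fin M`. -/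
noncomputable def ifno (M d L : ℕ)
    (P : Matrix (Fin M × Fin d) (Fin M ⊕ Fin M) ℝ) (p : Fin M × Fin d → ℝ)
    (V : Matrix (Fin d) (Fin d) ℝ) (C : Fin M × Fin d → ℝ)
    (Q1 : Matrix (Fin M × Fin d) (Fin M × Fin d) ℝ) (q1 : Fin M × Fin d → ℝ)
    (Q2 : Matrix (Fin M) (Fin M × Fin d) ℝ) (q2 : Fin M → ℝ)
    (z : Fin M ⊕ Fin M → ℝ) : Fin M → ℝ :=
  Q2.mulVec (Q1.mulVec ((ifnoLayer M d V C)^[L] (P.mulVec z + p)) + q1) + q2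

/-
Every iterate `iter l` is continuous, and uniform convergence reduces the theorem to approximating
one iterate uniformly on `K`. A depth-one IFNO computes any shallow ReLU network
`F ↦ ∑ k, max (ℓ k F + c k) 0 • v k`, and such networks are uniformly dense in `C(K, ℝ^M)`:
exponential ridge functions `exp ∘ ℓ` span a point-separating subalgebra, hence a dense one by
Stone–Weierstrass, and each of them is a uniform limit of ReLU ridges because `exp` is uniformly
approximated on an interval by its piecewise-linear interpolant, a combination of translated ReLUs.
-/

open Set Submodule

noncomputable section

def reluRamp (δ s : ℝ) : ℝ := (max s 0 - max (s - δ) 0) / δ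

lemma reluRamp_of_nonpos {δ s : ℝ} (hδ : 0 ≤ δ) (hs : s ≤ 0) : reluRamp δ s = 0 := by
  simp [reluRamp, max_eq_right hs, max_eq_right (by linarith : s - δ ≤ 0)]

lemma reluRamp_of_le {δ s : ℝ} (hδ : 0 < δ) (hs : δ ≤ s) : reluRamp δ s = 1 := by
  rw [reluRamp, max_eq_left (by linarith), max_eq_left (by linarith)]
  field_simp
  ring

lemma reluRamp_mono {δ : ℝ} (hδ : 0 < δ) : Monotone (reluRamp δ) := by
  intro s t hst
  refine div_le_div_of_nonneg_right ?_ hδ.le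
  simp only [max_def]
  split_ifs <;> linarith

def reluHat (δ s : ℝ) : ℝ := reluRamp δ (s + δ) - reluRamp δ s

lemma reluHat_nonneg {δ : ℝ} (hδ : 0 < δ) (s : ℝ) : 0 ≤ reluHat δ s :=
  sub_nonneg.2 (reluRamp_mono hδ (by linarith))

lemma reluHat_eq_zero_of_le_abs {δ s : ℝ} (hδ : 0 < δ) (hs : δ ≤ |s|) : reluHat δ s = 0 := by
  rcases le_abs'.1 hs with hs | hs
  · rw [reluHat, reluRamp_of_nonpos hδ.le (by linarith), reluRamp_of_nonpos hδ.le (by linarith),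
      sub_zero]
  · rw [reluHat, reluRamp_of_le hδ (by linarith), reluRamp_of_le hδ hs, sub_self]

lemma sum_range_reluHat_eq_one {δ a x : ℝ} (hδ : 0 < δ) {n : ℕ} (hax : a ≤ x)
    (hxn : x ≤ a + n * δ) :
    ∑ i ∈ Finset.range (n + 1), reluHat δ (x - (a + i * δ)) = 1 := by
  have htel : ∀ i : ℕ, reluHat δ (x - (a + i * δ))
      = reluRamp δ (x - a + δ - i * δ) - reluRamp δ (x - a + δ - (i + 1 : ℕ) * δ) := by
    intro i
    rw [reluHat]
    push_cast
    ring_nf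
  simp only [htel, Finset.sum_range_sub', Nat.cast_zero, zero_mul, sub_zero]
  rw [reluRamp_of_le hδ (by linarith), reluRamp_of_nonpos hδ.le (by push_cast; linarith), sub_zero]

def reluTranslates : Set (ℝ → ℝ) := range fun t x => max (x - t) 0

lemma reluHat_mem_span {δ : ℝ} (c : ℝ) :
    (fun x => reluHat δ (x - c)) ∈ span ℝ reluTranslates := by
  have hramp : ∀ c, (fun x => reluRamp δ (x - c)) ∈ span ℝ reluTranslates := by
    intro c
    have : (fun x => reluRamp δ (x - c))
        = δ⁻¹ • ((fun x => max (x - c) 0) - fun x => max (x - (c + δ)) 0) := by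
      ext x
      simp [reluRamp, div_eq_inv_mul, sub_sub]
    rw [this]
    exact smul_mem _ _ (sub_mem (subset_span ⟨c, rfl⟩) (subset_span ⟨c + δ, rfl⟩))
  have : (fun x => reluHat δ (x - c))
      = (fun x => reluRamp δ (x - (c - δ))) - fun x => reluRamp δ (x - c) := by
    ext x
    simp [reluHat, sub_add]
  rw [this]
  exact sub_mem (hramp _) (hramp _)

theorem exists_mem_span_reluTranslates_near {φ : ℝ → ℝ} (hφ : Continuous φ) (a b : ℝ)
    {ε : ℝ} (hε : 0 < ε) :
    ∃ g ∈ span ℝ reluTranslates, ∀ x ∈ Icc a b, |φ x - g x| ≤ ε := by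
  obtain ⟨δ₀, hδ₀, hφδ₀⟩ := Metric.uniformContinuousOn_iff.1
    ((isCompact_Icc (a := a - 1) (b := b + 1)).uniformContinuousOn_of_continuous
      hφ.continuousOn) ε hε
  set δ := min δ₀ 1
  have hδ : 0 < δ := lt_min hδ₀ one_pos
  set n := ⌈(b - a) / δ⌉₊
  set t : ℕ → ℝ := fun i => a + i * δ
  refine ⟨∑ i ∈ Finset.range (n + 1), φ (t i) • fun x => reluHat δ (x - t i),
    sum_mem fun i _ => smul_mem _ _ (reluHat_mem_span _), fun x hx => ?_⟩
  have hbn : b ≤ a + n * δ := by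
    have := Nat.le_ceil ((b - a) / δ)
    rw [div_le_iff₀ hδ] at this
    linarith
  have hunity : ∑ i ∈ Finset.range (n + 1), reluHat δ (x - t i) = 1 :=
    sum_range_reluHat_eq_one hδ hx.1 (hx.2.trans hbn)
  have hclose : ∀ i, |φ x - φ (t i)| * reluHat δ (x - t i) ≤ ε * reluHat δ (x - t i) := by
    intro i
    rcases le_or_gt δ |x - t i| with h | h
    · simp [reluHat_eq_zero_of_le_abs hδ h]
    · have hδ1 : δ ≤ 1 := min_le_right _ _
      have hti := abs_sub_lt_iff.1 h
      refine mul_le_mul_of_nonneg_right (le_of_lt ?_) (reluHat_nonneg hδ _)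
      exact hφδ₀ x ⟨by linarith [hx.1], by linarith [hx.2]⟩ (t i)
        ⟨by linarith [hx.1], by linarith [hx.2]⟩ (h.trans_le (min_le_left _ _))
  simp only [Finset.sum_apply, Pi.smul_apply, smul_eq_mul]
  calc |φ x - ∑ i ∈ Finset.range (n + 1), φ (t i) * reluHat δ (x - t i)|
      = |∑ i ∈ Finset.range (n + 1), (φ x - φ (t i)) * reluHat δ (x - t i)| := by
        simp only [sub_mul, Finset.sum_sub_distrib, ← Finset.mul_sum, hunity, mul_one]
    _ ≤ ∑ i ∈ Finset.range (n + 1), |φ x - φ (t i)| * reluHat δ (x - t i) := by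
        refine (Finset.abs_sum_le_sum_abs _ _).trans_eq (Finset.sum_congr rfl fun i _ => ?_)
        rw [abs_mul, abs_of_nonneg (reluHat_nonneg hδ _)]
    _ ≤ ∑ i ∈ Finset.range (n + 1), ε * reluHat δ (x - t i) := Finset.sum_le_sum fun i _ => hclose i
    _ = ε := by rw [← Finset.mul_sum, hunity, mul_one]

section Ridge

variable {E : Type*} [AddCommGroup E] [Module ℝ E] [TopologicalSpace E]

def reluRidge (K : Set E) (ℓ : StrongDual ℝ E) (c : ℝ) : C(K, ℝ) :=
  ⟨fun x => max (ℓ x + c) 0, by fun_prop⟩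

def reluRidges (K : Set E) : Set C(K, ℝ) := range fun p : StrongDual ℝ E × ℝ => reluRidge K p.1 p.2

lemma exists_mem_span_reluRidges_comp (K : Set E) {g : ℝ → ℝ} (hg : g ∈ span ℝ reluTranslates)
    (ℓ : StrongDual ℝ E) : ∃ G ∈ span ℝ (reluRidges K), ∀ x : K, G x = g (ℓ x) := by
  induction hg using span_induction with
  | mem _ h =>
    obtain ⟨t, rfl⟩ := h
    exact ⟨reluRidge K ℓ (-t), subset_span ⟨(ℓ, -t), rfl⟩,
      fun x => by simp [reluRidge, sub_eq_add_neg]⟩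
  | zero => exact ⟨0, zero_mem _, fun x => rfl⟩
  | add g₁ g₂ _ _ h₁ h₂ =>
    obtain ⟨G₁, hG₁, e₁⟩ := h₁
    obtain ⟨G₂, hG₂, e₂⟩ := h₂
    exact ⟨G₁ + G₂, add_mem hG₁ hG₂, fun x => by simp [e₁, e₂]⟩
  | smul r g _ h =>
    obtain ⟨G, hG, e⟩ := h
    exact ⟨r • G, smul_mem _ r hG, fun x => by simp [e]⟩

def expRidgeHom (K : Set E) : Multiplicative (StrongDual ℝ E) →* C(K, ℝ) where
  toFun ℓ := ⟨fun x => Real.exp (ℓ.toAdd x), by fun_prop⟩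
  map_one' := by ext; simp
  map_mul' ℓ₁ ℓ₂ := by ext; simp [Real.exp_add]

lemma expRidgeHom_mem_closure_span_reluRidges (K : Set E) [CompactSpace K] (ℓ : StrongDual ℝ E) :
    expRidgeHom K (.ofAdd ℓ) ∈ (span ℝ (reluRidges K)).topologicalClosure := by
  rw [← SetLike.mem_coe, topologicalClosure_coe, Metric.mem_closure_iff]
  intro ε hε
  set ℓK : C(K, ℝ) := ⟨fun x => ℓ x, by fun_prop⟩
  obtain ⟨g, hg, hexp⟩ := exists_mem_span_reluTranslates_near Real.continuous_exp (-‖ℓK‖) ‖ℓK‖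
    (half_pos hε)
  obtain ⟨G, hG, hGg⟩ := exists_mem_span_reluRidges_comp K hg ℓ
  refine ⟨G, hG, lt_of_le_of_lt ((ContinuousMap.dist_le (half_pos hε).le).2 fun x => ?_)
    (half_lt_self hε)⟩
  rw [Real.dist_eq, hGg]
  exact hexp _ (abs_le.1 (ℓK.norm_coe_le_norm x))

theorem dense_span_reluRidges [SeparatingDual ℝ E] (K : Set E) [CompactSpace K] :
    Dense (span ℝ (reluRidges K) : Set C(K, ℝ)) := by
  set A := Algebra.adjoin ℝ (MonoidHom.mrange (expRidgeHom K) : Set C(K, ℝ))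
  have hsep : A.SeparatesPoints := by
    intro x y hxy
    obtain ⟨ℓ, hℓ⟩ := SeparatingDual.exists_separating_of_ne (R := ℝ) (Subtype.coe_ne_coe.2 hxy)
    refine ⟨_, ⟨expRidgeHom K (.ofAdd ℓ), Algebra.subset_adjoin ⟨_, rfl⟩, rfl⟩, ?_⟩
    simpa [expRidgeHom] using hℓ
  have hA : Subalgebra.toSubmodule A ≤ (span ℝ (reluRidges K)).topologicalClosure := by
    rw [Algebra.adjoin_toSubmodule_le, Submonoid.closure_eq]
    rintro _ ⟨ℓ, rfl⟩
    exact expRidgeHom_mem_closure_span_reluRidges K _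
  rw [dense_iff_closure_eq, Set.eq_univ_iff_forall]
  intro f
  have hf : f ∈ closure (A : Set C(K, ℝ)) := by
    rw [← Subalgebra.topologicalClosure_coe,
      ContinuousMap.subalgebra_topologicalClosure_eq_top_of_separatesPoints A hsep]
    trivial
  exact closure_minimal (t := closure (span ℝ (reluRidges K))) hA isClosed_closure hf

end Ridge

section RidgeVec

open ContinuousLinearMap

variable {E : Type*} [AddCommGroup E] [Module ℝ E] [TopologicalSpace E]
  {F : Type*} [NormedAddCommGroup F] [NormedSpace ℝ F]

def reluRidgeVecs (K : Set E) (F : Type*) [NormedAddCommGroup F] [NormedSpace ℝ F] :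
    Set C(K, F) :=
  range fun p : StrongDual ℝ E × ℝ × F =>
    (toSpanSingleton ℝ p.2.2).compLeftContinuous ℝ K (reluRidge K p.1 p.2.1)

lemma span_reluRidges_le_comap (K : Set E) (v : F) :
    span ℝ (reluRidges K) ≤ (span ℝ (reluRidgeVecs K F)).comap
      ((toSpanSingleton ℝ v).compLeftContinuous ℝ K : C(K, ℝ) →ₗ[ℝ] C(K, F)) :=
  span_le.2 (by rintro _ ⟨p, rfl⟩; exact subset_span ⟨(p.1, p.2, v), rfl⟩)

theorem dense_span_reluRidgeVecs [SeparatingDual ℝ E] [FiniteDimensional ℝ F] (K : Set E)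
    [CompactSpace K] : Dense (span ℝ (reluRidgeVecs K F) : Set C(K, F)) := by
  intro f
  set b := Module.finBasis ℝ F
  have hf : f = ∑ i, (toSpanSingleton ℝ (b i)).compLeftContinuous ℝ K
      ⟨fun x => b.coord i (f x), by fun_prop⟩ := by
    ext x
    simp [b.sum_repr]
  rw [hf, ← topologicalClosure_coe]
  exact sum_mem fun i _ => map_mem_closure (ContinuousLinearMap.continuous _)
    (dense_span_reluRidges K _) fun g hg => span_reluRidges_le_comap K (b i) hg

theorem exists_sum_relu_smul_near [SeparatingDual ℝ E] [FiniteDimensional ℝ F] {K : Set E}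
    (hK : IsCompact K) {f : E → F} (hf : ContinuousOn f K) {ε : ℝ} (hε : 0 < ε) :
    ∃ (n : ℕ) (ℓ : Fin n → StrongDual ℝ E) (c : Fin n → ℝ) (v : Fin n → F),
      ∀ x ∈ K, ‖∑ k, max (ℓ k x + c k) 0 • v k - f x‖ ≤ ε := by
  have := isCompact_iff_compactSpace.1 hK
  obtain ⟨g, hg, hfg⟩ := Metric.mem_closure_iff.1
    (dense_span_reluRidgeVecs K ⟨K.domRestrict f, hf.domRestrict⟩) ε hε
  obtain ⟨n, a, gen, rfl⟩ := mem_span_set'.1 hg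
  choose p hp using fun k => (gen k).2
  refine ⟨n, fun k => (p k).1, fun k => (p k).2.1, fun k => a k • (p k).2.2, fun x hx => ?_⟩
  have hx := (ContinuousMap.dist_apply_le_dist ⟨x, hx⟩).trans hfg.le
  rw [dist_comm, dist_eq_norm] at hx
  simpa [← hp, reluRidge, smul_smul, mul_comm, Set.domRestrict_apply] using hx

end RidgeVec

lemma kroneckerMap_ones_mulVec {l m n o R : Type*} [Fintype m] [Fintype o] [CommSemiring R]
    (V : Matrix n o R) (H : m × o → R) :
    kroneckerMap (· * ·) (of fun (_ : l) (_ : m) => (1 : R)) V *ᵥ H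
      = fun p => (V *ᵥ fun k => ∑ j, H (j, k)) p.2 := by
  ext ⟨i, k⟩
  simp only [mulVec, dotProduct, Fintype.sum_prod_type, kroneckerMap_apply, of_apply, one_mul,
    Finset.mul_sum]
  exact Finset.sum_comm

lemma EuclideanSpace.strongDual_apply_eq_sum {ι : Type*} [Fintype ι] [DecidableEq ι]
    (ℓ : StrongDual ℝ (EuclideanSpace ℝ ι)) (F : EuclideanSpace ℝ ι) :
    ℓ F = ∑ j, ℓ (EuclideanSpace.single j 1) * F j := by
  conv_lhs => rw [← (EuclideanSpace.basisFun ι ℝ).sum_repr F]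
  simp [mul_comm]

theorem exists_ifno_eq_sum_relu_smul {M n : ℕ} (ℓ : Fin n → StrongDual ℝ (EuclideanSpace ℝ (Fin M)))
    (c : Fin n → ℝ) (v : Fin n → EuclideanSpace ℝ (Fin M)) :
    ∃ (d : ℕ) (P : Matrix (Fin M × Fin d) (Fin M ⊕ Fin M) ℝ) (p : Fin M × Fin d → ℝ)
      (V : Matrix (Fin d) (Fin d) ℝ) (C : Fin M × Fin d → ℝ)
      (Q1 : Matrix (Fin M × Fin d) (Fin M × Fin d) ℝ) (q1 : Fin M × Fin d → ℝ)
      (Q2 : Matrix (Fin M) (Fin M × Fin d) ℝ) (q2 : Fin M → ℝ),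
      ∀ U F : EuclideanSpace ℝ (Fin M),
        (WithLp.equiv 2 (Fin M → ℝ)).symm
            (ifno M d 1 P p V C Q1 q1 Q2 q2 (Sum.elim (fun i => U i) (fun i => F i)))
          = ∑ k, max (ℓ k F + c k) 0 • v k := by
  set W : Fin n → Fin M → ℝ := fun k j => ℓ k (EuclideanSpace.single j 1)
  -- Channel `castAdd k` carries `W k i * F i` at grid point `i`, so the grid sum taken by `Ṽ`
  -- is `ℓ k F`; `V` moves it to channel `natAdd k`, where `C` adds the bias and the ReLU acts.
  let P : Matrix (Fin M × Fin (n + n)) (Fin M ⊕ Fin M) ℝ := of fun ik =>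
    Sum.elim 0 fun j => Fin.addCases (fun k => if ik.1 = j then W k j else 0) 0 ik.2
  let V : Matrix (Fin (n + n)) (Fin (n + n)) ℝ :=
    of <| Fin.addCases 0 fun k => Fin.addCases (fun l => if k = l then 1 else 0) 0
  let C : Fin M × Fin (n + n) → ℝ := fun ik => Fin.addCases 0 c ik.2
  let Q2 : Matrix (Fin M) (Fin M × Fin (n + n)) ℝ := of fun r ik =>
    Fin.addCases 0 (fun k => if ik.1 = r then v k r else 0) ik.2
  refine ⟨n + n, P, 0, V, C, 1, 0, Q2, 0, fun U F => ?_⟩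
  set H₀ := P *ᵥ Sum.elim (fun i => U i) (fun i => F i)
  have hH₀ : H₀ = fun ik => Fin.addCases (fun k => W k ik.1 * F ik.1) 0 ik.2 := by
    ext ⟨i, k⟩
    refine Fin.addCases (fun k => ?_) (fun k => ?_) k <;>
      simp [H₀, P, mulVec, dotProduct, Fintype.sum_sum_type, -Fin.natAdd_eq_addNat]
  have hgrid : (fun l => ∑ j, H₀ (j, l)) = Fin.addCases (fun k => ℓ k F) 0 := by
    ext l
    refine Fin.addCases (fun k => ?_) (fun k => ?_) l <;>
      simp [hH₀, EuclideanSpace.strongDual_apply_eq_sum (ℓ k) F, W, -Fin.natAdd_eq_addNat]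
  have hH₁ : ifnoLayer M (n + n) V C H₀
      = fun ik =>
        Fin.addCases (fun k => W k ik.1 * F ik.1) (fun k => max (ℓ k F + c k) 0) ik.2 := by
    rw [ifnoLayer, kroneckerMap_ones_mulVec, hgrid]
    ext ⟨i, k⟩
    refine Fin.addCases (fun k => ?_) (fun k => ?_) k <;>
      simp [hH₀, vecReLU, V, C, mulVec, dotProduct, Fin.sum_univ_add, -Fin.natAdd_eq_addNat]
  have hout : ifno M (n + n) 1 P 0 V C 1 0 Q2 0 (Sum.elim (fun i => U i) (fun i => F i))
      = Q2 *ᵥ ifnoLayer M (n + n) V C H₀ := by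
    simp [ifno, H₀]
  ext r
  simp [hout, hH₁, Q2, mulVec, dotProduct, Fintype.sum_prod_type, Fin.sum_univ_add, mul_comm,
    -Fin.natAdd_eq_addNat]

end

theorem ifno_universal_approximation_general
    (M : ℕ)
    (K : Set (EuclideanSpace ℝ (Fin M))) (hKc : IsCompact K)
    (Ustar : EuclideanSpace ℝ (Fin M) → EuclideanSpace ℝ (Fin M))
    (U0 : EuclideanSpace ℝ (Fin M))
    (R : EuclideanSpace ℝ (Fin M) → EuclideanSpace ℝ (Fin M) → EuclideanSpace ℝ (Fin M))
    (hRcont : Continuous fun q : EuclideanSpace ℝ (Fin M) × EuclideanSpace ℝ (Fin M) =>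
      R q.1 q.2)
    (iter : ℕ → EuclideanSpace ℝ (Fin M) → EuclideanSpace ℝ (Fin M))
    (hiter0 : ∀ F, iter 0 F = U0)
    (hiterS : ∀ l F, iter (l + 1) F = iter l F + R (iter l F) F)
    (hconv : ∀ ε > 0, ∃ L0 : ℕ, ∀ l ≥ L0, ∀ F ∈ K, ‖iter l F - Ustar F‖ ≤ ε) :
    ∀ ε > 0, ∃ (L d : ℕ)
      (P : Matrix (Fin M × Fin d) (Fin M ⊕ Fin M) ℝ) (p : Fin M × Fin d → ℝ)
      (V : Matrix (Fin d) (Fin d) ℝ) (C : Fin M × Fin d → ℝ)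
      (Q1 : Matrix (Fin M × Fin d) (Fin M × Fin d) ℝ) (q1 : Fin M × Fin d → ℝ)
      (Q2 : Matrix (Fin M) (Fin M × Fin d) ℝ) (q2 : Fin M → ℝ),
      ∀ F ∈ K,
        ‖(WithLp.equiv 2 (Fin M → ℝ)).symm
            (ifno M d L P p V C Q1 q1 Q2 q2 (Sum.elim (fun i => U0 i) (fun i => F i)))
          - Ustar F‖ ≤ ε := by
  intro ε hε
  obtain ⟨L₀, hL₀⟩ := hconv (ε / 2) (half_pos hε)
  have hcont : ∀ l, Continuous (iter l) := by
    intro l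
    induction l with
    | zero => simpa [funext hiter0] using continuous_const
    | succ l ih =>
      rw [funext (hiterS l)]
      exact ih.add (hRcont.comp (ih.prodMk continuous_id))
  obtain ⟨n, ℓ, c, v, hnet⟩ :=
    exists_sum_relu_smul_near hKc (hcont L₀).continuousOn (half_pos hε)
  obtain ⟨d, P, p, V, C, Q1, q1, Q2, q2, hifno⟩ := exists_ifno_eq_sum_relu_smul ℓ c v
  refine ⟨1, d, P, p, V, C, Q1, q1, Q2, q2, fun F hF => ?_⟩
  rw [hifno]
  calc ‖∑ k, max (ℓ k F + c k) 0 • v k - Ustar F‖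
      ≤ ‖∑ k, max (ℓ k F + c k) 0 • v k - iter L₀ F‖ + ‖iter L₀ F - Ustar F‖ :=
        norm_sub_le_norm_sub_add_norm_sub _ _ _
    _ ≤ ε / 2 + ε / 2 := add_le_add (hnet F hF) (hL₀ L₀ le_rfl F hF)
    _ = ε := add_halves ε

/-- Universal approximation of IFNOs: if a continuous update map `R` defines a
fixed-point iteration that vanishes at the solution map `Ustar`, is Lipschitz in its
first argument uniformly over the compact input set `K`, and converges uniformly on
`K`, then for every `ε > 0` there is an IFNO whose output approximates `Ustar` to
within `ε` on `K`, applied to the concatenation `[U⁰; F]` of the initial guess and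
the input. -/
theorem ifno_universal_approximation
    (M : ℕ) (hM : 1 ≤ M)
    (K : Set (EuclideanSpace ℝ (Fin M))) (hKne : K.Nonempty) (hKc : IsCompact K)
    (Ustar : EuclideanSpace ℝ (Fin M) → EuclideanSpace ℝ (Fin M))
    (U0 : EuclideanSpace ℝ (Fin M))
    (R : EuclideanSpace ℝ (Fin M) → EuclideanSpace ℝ (Fin M) → EuclideanSpace ℝ (Fin M))
    (hRcont : Continuous fun q : EuclideanSpace ℝ (Fin M) × EuclideanSpace ℝ (Fin M) =>
      R q.1 q.2)
    (hRzero : ∀ F ∈ K, R (Ustar F) F = 0)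
    (m : ℝ) (hm : 0 < m)
    (hLip : ∀ (U V : EuclideanSpace ℝ (Fin M)), ∀ F ∈ K, ‖R U F - R V F‖ ≤ m * ‖U - V‖)
    (iter : ℕ → EuclideanSpace ℝ (Fin M) → EuclideanSpace ℝ (Fin M))
    (hiter0 : ∀ F, iter 0 F = U0)
    (hiterS : ∀ l F, iter (l + 1) F = iter l F + R (iter l F) F)
    (hconv : ∀ ε > 0, ∃ L0 : ℕ, ∀ l ≥ L0, ∀ F ∈ K, ‖iter l F - Ustar F‖ ≤ ε) :
    ∀ ε > 0, ∃ (L d : ℕ)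
      (P : Matrix (Fin M × Fin d) (Fin M ⊕ Fin M) ℝ) (p : Fin M × Fin d → ℝ)
      (V : Matrix (Fin d) (Fin d) ℝ) (C : Fin M × Fin d → ℝ)
      (Q1 : Matrix (Fin M × Fin d) (Fin M × Fin d) ℝ) (q1 : Fin M × Fin d → ℝ)
      (Q2 : Matrix (Fin M) (Fin M × Fin d) ℝ) (q2 : Fin M → ℝ),
      ∀ F ∈ K,
        ‖(WithLp.equiv 2 (Fin M → ℝ)).symm
            (ifno M d L P p V C Q1 q1 Q2 q2 (Sum.elim (fun i => U0 i) (fun i => F i)))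
          - Ustar F‖ ≤ ε :=
  ifno_universal_approximation_general M K hKc Ustar U0 R hRcont iter hiter0 hiterS hconv
end

section
/- Exact representation of shallow-network fixed-point iterations by IFNOs (the representation half of the proof of the main Theorem): Let M, d̃ ∈ ℕ with M, d̃ ≥ 1, L ∈ ℕ, let S ∈ ℝ^{M×d̃M} admit a right inverse (there exists S⁺ ∈ ℝ^{d̃M×M} with S S⁺ = I_M), and let B ∈ ℝ^{d̃M×2M}, A ∈ ℝ^{d̃M}, U⁰ ∈ ℝ^M. Then there exist a feature dimension d ∈ ℕ (one may take d = (d̃+1)M) and IFNO parameters P ∈ ℝ^{dM×2M}, p ∈ ℝ^{dM}, V ∈ ℝ^{d×d}, C ∈ ℝ^{dM}, Q₁ ∈ ℝ^{dM×dM}, Q₂ ∈ ℝ^{M×dM}, q₁ ∈ ℝ^{dM}, q₂ ∈ ℝ^M such that for every F ∈ ℝ^M, 𝒬(ℒ^L(𝒫([U⁰; F]))) = Û^L(F), where Û^0(F) = U⁰ and Û^{l+1}(F) = Û^l(F) + S·σ(B[Û^l(F); F] + A) for l = 0,…,L−1; that is, the IFNO exactly reproduces L steps of the shallow-network fixed-point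 iteration. -/
open Matrix

/-- The shallow-network fixed-point iteration
`Û^0(F) = U⁰`, `Û^{l+1}(F) = Û^l(F) + S·σ(B[Û^l(F); F] + A)`, where `[x; y]` is the
concatenation of `x` and `y` (indexed by `Fin M ⊕ Fin M`), and the rows of `B` (and
columns of `S`) are indexed by `Fin M × Fin d̃`. -/
noncomputable def shallowIter (M dt : ℕ) (S : Matrix (Fin M) (Fin M × Fin dt) ℝ)
    (B : Matrix (Fin M × Fin dt) (Fin M ⊕ Fin M) ℝ) (A : Fin M × Fin dt → ℝ)
    (U0 : Fin M → ℝ) (F : Fin M → ℝ) : ℕ → (Fin M → ℝ)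
  | 0 => U0
  | l + 1 =>
      shallowIter M dt S B A U0 F l
        + S.mulVec (vecReLU (B.mulVec (Sum.elim (shallowIter M dt S B A U0 F l) F) + A))

section Main
variable (M dt : ℕ) (S : Matrix (Fin M) (Fin M × Fin dt) ℝ)
    (B : Matrix (Fin M × Fin dt) (Fin M ⊕ Fin M) ℝ) (A : Fin M × Fin dt → ℝ)

abbrev Idx := (Fin M × Fin dt) ⊕ Fin M

noncomputable def Wmat : Matrix (Idx M dt) (Idx M dt) ℝ :=
  fun i j => Sum.elim
    (fun a => Sum.elim (fun b => ∑ n, B a (Sum.inl n) * S n b) (fun m => B a (Sum.inr m)) j)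
    (fun _ => (0 : ℝ)) i

noncomputable def cvec : Idx M dt → ℝ := Sum.elim A 0

lemma Wmat_mulVec (Y : Fin M × Fin dt → ℝ) (F : Fin M → ℝ) :
    (Wmat M dt S B).mulVec (Sum.elim Y F) + cvec M dt A
      = Sum.elim (B.mulVec (Sum.elim (S.mulVec Y) F) + A) 0 := by
  funext i
  cases i with
  | inl a =>
      simp only [Pi.add_apply, Matrix.mulVec, dotProduct, Fintype.sum_sum_type, Wmat,
        cvec, Sum.elim_inl, Sum.elim_inr]
      congr 1
      congr 1
      simp only [Finset.sum_mul, Finset.mul_sum]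
      rw [Finset.sum_comm]
      simp [mul_assoc]
  | inr m =>
      simp [Wmat, cvec, Matrix.mulVec, dotProduct, Fintype.sum_sum_type]

end Main

section Thm
variable (M dt : ℕ) (S : Matrix (Fin M) (Fin M × Fin dt) ℝ)
    (B : Matrix (Fin M × Fin dt) (Fin M ⊕ Fin M) ℝ) (A : Fin M × Fin dt → ℝ)

noncomputable def dFeat : ℕ := Fintype.card (Idx M dt)
noncomputable def eIdx : Idx M dt ≃ Fin (dFeat M dt) := Fintype.equivFin _

noncomputable def Vmat : Matrix (Fin (dFeat M dt)) (Fin (dFeat M dt)) ℝ :=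
  fun i j => Wmat M dt S B ((eIdx M dt).symm i) ((eIdx M dt).symm j) / M

noncomputable def Cvec : Fin M × Fin (dFeat M dt) → ℝ := fun ki => cvec M dt A ((eIdx M dt).symm ki.2)

lemma layer_const (hM : 1 ≤ M) (h : Idx M dt → ℝ) :
    ifnoLayer M (dFeat M dt) (Vmat M dt S B) (Cvec M dt A)
        (fun ki => h ((eIdx M dt).symm ki.2))
      = fun ki => (h + vecReLU ((Wmat M dt S B).mulVec h + cvec M dt A)) ((eIdx M dt).symm ki.2) := by
  have hM0 : (M : ℝ) ≠ 0 := by positivity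
  funext ki
  obtain ⟨k, i⟩ := ki
  simp only [ifnoLayer, Pi.add_apply, vecReLU]
  congr 2
  simp only [Matrix.mulVec, dotProduct, Fintype.sum_prod_type, kroneckerMap_apply,
    Matrix.of_apply, one_mul, Vmat, Cvec]
  rw [Finset.sum_const]
  simp only [Finset.card_univ, Fintype.card_fin, nsmul_eq_mul]
  rw [show (∑ j, Wmat M dt S B ((eIdx M dt).symm i) ((eIdx M dt).symm j) / ↑M
        * h ((eIdx M dt).symm j))
      = (∑ b, Wmat M dt S B ((eIdx M dt).symm i) b * h b) / M from ?_]
  · field_simp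
  · rw [← Equiv.sum_comp (eIdx M dt).symm
      (fun b => Wmat M dt S B ((eIdx M dt).symm i) b * h b), Finset.sum_div]
    exact Finset.sum_congr rfl fun j _ => by ring
end Thm

noncomputable def Yiter (M dt : ℕ) (S : Matrix (Fin M) (Fin M × Fin dt) ℝ)
    (B : Matrix (Fin M × Fin dt) (Fin M ⊕ Fin M) ℝ) (A : Fin M × Fin dt → ℝ)
    (Y0 : Fin M × Fin dt → ℝ) (F : Fin M → ℝ) : ℕ → (Fin M × Fin dt → ℝ)
  | 0 => Y0
  | l + 1 => Yiter M dt S B A Y0 F l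
      + vecReLU (B.mulVec (Sum.elim (S.mulVec (Yiter M dt S B A Y0 F l)) F) + A)

lemma Yiter_spec (M dt : ℕ) (S : Matrix (Fin M) (Fin M × Fin dt) ℝ)
    (Sp : Matrix (Fin M × Fin dt) (Fin M) ℝ) (hSp : S * Sp = 1)
    (B : Matrix (Fin M × Fin dt) (Fin M ⊕ Fin M) ℝ) (A : Fin M × Fin dt → ℝ)
    (U0 : Fin M → ℝ) (F : Fin M → ℝ) :
    ∀ l, S.mulVec (Yiter M dt S B A (Sp.mulVec U0) F l) = shallowIter M dt S B A U0 F l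
  | 0 => by simp [Yiter, shallowIter, Matrix.mulVec_mulVec, hSp]
  | l + 1 => by
      simp [Yiter, shallowIter, Matrix.mulVec_add, Yiter_spec M dt S Sp hSp B A U0 F l]

lemma vecReLU_elim_zero {α β : Type*} [Fintype α] [Fintype β] (X : α → ℝ) :
    vecReLU (Sum.elim X (0 : β → ℝ)) = Sum.elim (vecReLU X) 0 := by
  funext i; cases i <;> simp [vecReLU]

lemma step_elim (M dt : ℕ) (S : Matrix (Fin M) (Fin M × Fin dt) ℝ)
    (B : Matrix (Fin M × Fin dt) (Fin M ⊕ Fin M) ℝ) (A : Fin M × Fin dt → ℝ)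
    (Y : Fin M × Fin dt → ℝ) (F : Fin M → ℝ) :
    Sum.elim Y F + vecReLU ((Wmat M dt S B).mulVec (Sum.elim Y F) + cvec M dt A)
      = Sum.elim (Y + vecReLU (B.mulVec (Sum.elim (S.mulVec Y) F) + A)) F := by
  rw [Wmat_mulVec, vecReLU_elim_zero]
  funext i; cases i <;> simp

lemma iter_const (M dt : ℕ) (hM : 1 ≤ M) (S : Matrix (Fin M) (Fin M × Fin dt) ℝ)
    (B : Matrix (Fin M × Fin dt) (Fin M ⊕ Fin M) ℝ) (A : Fin M × Fin dt → ℝ)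
    (Y0 : Fin M × Fin dt → ℝ) (F : Fin M → ℝ) (l : ℕ) :
    (ifnoLayer M (dFeat M dt) (Vmat M dt S B) (Cvec M dt A))^[l]
        (fun ki => Sum.elim Y0 F ((eIdx M dt).symm ki.2))
      = fun ki => Sum.elim (Yiter M dt S B A Y0 F l) F ((eIdx M dt).symm ki.2) := by
  induction l with
  | zero => simp [Yiter]
  | succ l ih =>
      rw [Function.iterate_succ_apply', ih, layer_const M dt S B A hM, step_elim]
      rfl

noncomputable def Pmat (M dt : ℕ) (Sp : Matrix (Fin M × Fin dt) (Fin M) ℝ) :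
    Matrix (Fin M × Fin (dFeat M dt)) (Fin M ⊕ Fin M) ℝ :=
  fun ki col => Sum.elim
    (fun a => Sum.elim (fun n => Sp a n) (fun _ => 0) col)
    (fun m => Sum.elim (fun _ => (0:ℝ)) (fun n => if n = m then 1 else 0) col)
    ((eIdx M dt).symm ki.2)

lemma Pmat_mulVec (M dt : ℕ) (Sp : Matrix (Fin M × Fin dt) (Fin M) ℝ)
    (U0 F : Fin M → ℝ) :
    (Pmat M dt Sp).mulVec (Sum.elim U0 F)
      = fun ki => Sum.elim (Sp.mulVec U0) F ((eIdx M dt).symm ki.2) := by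
  funext ki
  rcases h : (eIdx M dt).symm ki.2 with a | m <;>
    simp [Pmat, h, Matrix.mulVec, dotProduct, Fintype.sum_sum_type]

noncomputable def Q2mat (M dt : ℕ) (S : Matrix (Fin M) (Fin M × Fin dt) ℝ) (k0 : Fin M) :
    Matrix (Fin M) (Fin M × Fin (dFeat M dt)) ℝ :=
  fun n ki => if ki.1 = k0 then
    Sum.elim (fun a => S n a) (fun _ => 0) ((eIdx M dt).symm ki.2) else 0

lemma Q2mat_mulVec (M dt : ℕ) (S : Matrix (Fin M) (Fin M × Fin dt) ℝ) (k0 : Fin M)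
    (YL : Fin M × Fin dt → ℝ) (F : Fin M → ℝ) :
    (Q2mat M dt S k0).mulVec (fun ki => Sum.elim YL F ((eIdx M dt).symm ki.2))
      = S.mulVec YL := by
  funext n
  simp only [Q2mat, Matrix.mulVec, dotProduct, Fintype.sum_prod_type, ite_mul, zero_mul]
  rw [Finset.sum_comm]
  simp only [Finset.sum_ite_eq', Finset.mem_univ, if_true]
  rw [Equiv.sum_comp (eIdx M dt).symm
    (fun b => Sum.elim (fun a => S n a) (fun _ => 0) b * Sum.elim YL F b)]
  simp [Fintype.sum_sum_type, Fintype.sum_prod_type]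

/-- Exact representation of shallow-network fixed-point iterations by IFNOs: if `S`
admits a right inverse, then there are a feature dimension `d` and IFNO parameters such
that for every input `F` the depth-`L` IFNO applied to the concatenation `[U⁰; F]`
exactly reproduces `L` steps of the shallow-network fixed-point iteration. -/
theorem ifno_represents_shallow_fixed_point_iteration
    (M dt : ℕ) (hM : 1 ≤ M) (hdt : 1 ≤ dt) (L : ℕ)
    (S : Matrix (Fin M) (Fin M × Fin dt) ℝ)
    (Sp : Matrix (Fin M × Fin dt) (Fin M) ℝ) (hSp : S * Sp = 1)
    (B : Matrix (Fin M × Fin dt) (Fin M ⊕ Fin M) ℝ) (A : Fin M × Fin dt → ℝ)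
    (U0 : Fin M → ℝ) :
    ∃ (d : ℕ)
      (P : Matrix (Fin M × Fin d) (Fin M ⊕ Fin M) ℝ) (p : Fin M × Fin d → ℝ)
      (V : Matrix (Fin d) (Fin d) ℝ) (C : Fin M × Fin d → ℝ)
      (Q1 : Matrix (Fin M × Fin d) (Fin M × Fin d) ℝ) (q1 : Fin M × Fin d → ℝ)
      (Q2 : Matrix (Fin M) (Fin M × Fin d) ℝ) (q2 : Fin M → ℝ),
      ∀ F : Fin M → ℝ,
        ifno M d L P p V C Q1 q1 Q2 q2 (Sum.elim U0 F)
          = shallowIter M dt S B A U0 F L := by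
  refine ⟨dFeat M dt, Pmat M dt Sp, 0, Vmat M dt S B, Cvec M dt A, 1, 0,
    Q2mat M dt S ⟨0, hM⟩, 0, ?_⟩
  intro F
  simp only [ifno, add_zero, Matrix.one_mulVec]
  rw [Pmat_mulVec, iter_const M dt hM, Q2mat_mulVec,
    Yiter_spec M dt S Sp hSp B A U0 F L]
end
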